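/- arXiv:1912.13259 — 4 statements merged into one kernel-verified Lean document; each statement's English description precedes it below -/
import Mathlib

section
/- Let (O, μ) be a measure space, H = L²(O, μ), and let A be a linear maximal monotone operator on H whose resolvent J_λ = (I+λA)^{-1} is sub-Markovian (i.e. 0 ≤ φ ≤ 1 a.e. implies 0 ≤ J_λ φ ≤ 1 a.e.) and is a contraction in the L¹(O,μ)-norm. Let β : ℝ → ℝ be continuous, nondecreasing, bounded, with β(0) = 0. Then for every v ∈ D(A), ⟨Av, β(v)⟩_{L²} ≥ 0. -/
open MeasureTheory Filter Topology
open scoped ENNReal RealInnerProductSpace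

/-!
For `λ > 0` the resolvent identity gives `λ • J λ (A v) = v - J λ v`, and `J λ (A v) → A v` as
`λ → 0⁺` because the `J λ` are contractions and `D` is dense. So it suffices to show
`⟪f - T f, β ∘ f⟫ ≥ 0` for every sub-Markovian `L¹`-contraction `T` of `L²`.

Splitting `β ∘ f` into positive and negative parts (the latter handled by replacing `f` with `-f`)
reduces this to `β ≥ 0`. Then `β ∘ f` is a limit of Riemann sums of the indicators of the
superlevel sets `{c ≤ β ∘ f}`, which are of the form `{t ≤ f}` with `t > 0`. Finally
`∫_{t ≤ f} (f - T f) ≥ ∫ (f - t)⁺ - ∫ (T f - t)⁺ ≥ 0`: writing `f = (f - t)⁺ + min f t`, the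
operator `T` maps `min f t` below `t` and does not increase the `L¹` norm of `(f - t)⁺`.
-/

theorem Monotone.setOf_le_eq_empty_or_Ici {β : ℝ → ℝ} (hβm : Monotone β) (hβc : Continuous β)
    (hβ0 : β 0 = 0) {c : ℝ} (hc : 0 < c) :
    {r | c ≤ β r} = ∅ ∨ ∃ t, 0 < t ∧ {r | c ≤ β r} = Set.Ici t := by
  rcases Set.eq_empty_or_nonempty {r | c ≤ β r} with h | hne
  · exact .inl h
  have hpos : ∀ r ∈ {r | c ≤ β r}, 0 < r := fun r hr =>
    hβm.reflect_lt (by rw [hβ0]; exact hc.trans_le hr)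
  have hbdd : BddBelow {r | c ≤ β r} := ⟨0, fun r hr => (hpos r hr).le⟩
  have hmem := (isClosed_le continuous_const hβc).csInf_mem hne hbdd
  exact .inr ⟨_, hpos _ hmem,
    Set.ext fun r => ⟨fun hr => csInf_le hbdd hr, fun hr => hmem.trans (hβm hr)⟩⟩

/-- A Riemann sum, with mesh `1 / n` over `[0, n]`, of `y = ∫ c in Ioi 0, 1{c ≤ y}` for `y ≥ 0`. -/
noncomputable def stepApprox (n : ℕ) (y : ℝ) : ℝ :=
  (n : ℝ)⁻¹ * ∑ k ∈ Finset.Icc 1 (n ^ 2), if (k : ℝ) / n ≤ y then 1 else 0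

theorem stepApprox_eq {n : ℕ} (hn : n ≠ 0) {y : ℝ} (hy : 0 ≤ y) :
    stepApprox n y = (min (n ^ 2) ⌊n * y⌋₊ : ℕ) / n := by
  have hn' : (0 : ℝ) < n := by positivity
  have hfilter : (Finset.Icc 1 (n ^ 2)).filter (fun k : ℕ => (k : ℝ) / n ≤ y) =
      Finset.Icc 1 (min (n ^ 2) ⌊n * y⌋₊) := by
    ext k
    simp only [Finset.mem_filter, Finset.mem_Icc, le_min_iff,
      Nat.le_floor_iff (by positivity : (0 : ℝ) ≤ n * y), div_le_iff₀ hn', mul_comm y]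
    tauto
  rw [stepApprox, Finset.sum_boole, hfilter, Nat.card_Icc, Nat.add_sub_cancel, inv_mul_eq_div]

theorem stepApprox_mem_Icc (n : ℕ) {y : ℝ} (hy : 0 ≤ y) : stepApprox n y ∈ Set.Icc 0 y := by
  rcases eq_or_ne n 0 with rfl | hn
  · simp [stepApprox, hy]
  rw [stepApprox_eq hn hy]
  refine ⟨by positivity, div_le_of_le_mul₀ (by positivity) hy ?_⟩
  calc ((min (n ^ 2) ⌊n * y⌋₊ : ℕ) : ℝ) ≤ ⌊n * y⌋₊ := by exact_mod_cast min_le_right _ _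
    _ ≤ n * y := Nat.floor_le (by positivity)
    _ = y * n := mul_comm _ _

theorem tendsto_stepApprox {y : ℝ} (hy : 0 ≤ y) :
    Tendsto (fun n => stepApprox n y) atTop (𝓝 y) := by
  refine ((tendsto_nat_floor_mul_div_atTop hy).comp tendsto_natCast_atTop_atTop).congr' ?_
  filter_upwards [eventually_ge_atTop 1, eventually_ge_atTop ⌈y⌉₊] with n hn hyn
  have hfloor : ⌊n * y⌋₊ ≤ n ^ 2 := Nat.floor_le_of_le <| by
    push_cast
    nlinarith [Nat.le_ceil y, (Nat.cast_le (α := ℝ)).2 hyn]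
  rw [stepApprox_eq (by omega) hy, min_eq_right hfloor, mul_comm]
  rfl

theorem measurable_stepApprox (n : ℕ) : Measurable (stepApprox n) :=
  (Finset.measurable_sum _ fun _ _ =>
    Measurable.ite measurableSet_Ici measurable_const measurable_const).const_mul _

section Resolvent

variable {H : Type*} [NormedAddCommGroup H] [InnerProductSpace ℝ H]
  {D : Submodule ℝ H} {A : H →ₗ[ℝ] H}

theorem norm_sq_le_inner_add_smul (hmono : ∀ v ∈ D, 0 ≤ ⟪A v, v⟫) {w : H} (hw : w ∈ D)
    {lam : ℝ} (hlam : 0 ≤ lam) : ‖w‖ ^ 2 ≤ ⟪w + lam • A w, w⟫ := by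
  rw [inner_add_left, real_inner_smul_left, real_inner_self_eq_norm_sq]
  exact le_add_of_nonneg_right (mul_nonneg hlam (hmono w hw))

theorem dense_of_surjective_add [CompleteSpace H] (hmono : ∀ v ∈ D, 0 ≤ ⟪A v, v⟫)
    (hmax : ∀ h : H, ∃ w ∈ D, w + A w = h) : Dense (D : Set H) := by
  rw [Submodule.dense_iff_topologicalClosure_eq_top, Submodule.topologicalClosure_eq_top_iff,
    Submodule.eq_bot_iff]
  intro z hz
  obtain ⟨w, hw, rfl⟩ := hmax z
  have : ‖w‖ ^ 2 ≤ 0 := by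
    simpa [(Submodule.mem_orthogonal' D _).1 hz w hw, real_inner_comm] using
      norm_sq_le_inner_add_smul hmono hw zero_le_one
  simp [norm_eq_zero.1 (by nlinarith [norm_nonneg w] : ‖w‖ = 0)]

variable {J : ℝ → H →L[ℝ] H}

theorem norm_resolvent_apply_le (hmono : ∀ v ∈ D, 0 ≤ ⟪A v, v⟫)
    (hJD : ∀ lam : ℝ, 0 < lam → ∀ h, J lam h ∈ D)
    (hJres : ∀ lam : ℝ, 0 < lam → ∀ h, J lam h + lam • A (J lam h) = h)
    {lam : ℝ} (hlam : 0 < lam) (h : H) : ‖J lam h‖ ≤ ‖h‖ := by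
  have key : ‖J lam h‖ ^ 2 ≤ ‖h‖ * ‖J lam h‖ :=
    calc ‖J lam h‖ ^ 2 ≤ ⟪J lam h + lam • A (J lam h), J lam h⟫ :=
          norm_sq_le_inner_add_smul hmono (hJD lam hlam h) hlam.le
      _ = ⟪h, J lam h⟫ := by rw [hJres lam hlam h]
      _ ≤ ‖h‖ * ‖J lam h‖ := real_inner_le_norm _ _
  nlinarith [norm_nonneg (J lam h), norm_nonneg h]

theorem smul_resolvent_apply_map (hmono : ∀ v ∈ D, 0 ≤ ⟪A v, v⟫)
    (hJD : ∀ lam : ℝ, 0 < lam → ∀ h, J lam h ∈ D)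
    (hJres : ∀ lam : ℝ, 0 < lam → ∀ h, J lam h + lam • A (J lam h) = h)
    {lam : ℝ} (hlam : 0 < lam) {u : H} (hu : u ∈ D) : lam • J lam (A u) = u - J lam u := by
  set w := J lam (u + lam • A u) - u
  have hw0 : w + lam • A w = 0 := by
    simp only [w, map_sub, smul_sub, sub_add_sub_comm, hJres lam hlam, sub_self]
  have : ‖w‖ ^ 2 ≤ 0 := by
    simpa [hw0] using norm_sq_le_inner_add_smul hmono (w := w) (D.sub_mem (hJD lam hlam _) hu)
      hlam.le
  have hJ : J lam (u + lam • A u) = u :=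
    sub_eq_zero.1 (norm_eq_zero.1 (by nlinarith [norm_nonneg w]))
  rw [eq_sub_iff_add_eq, add_comm, ← map_smul, ← map_add, hJ]

theorem tendsto_resolvent_apply [CompleteSpace H] (hmono : ∀ v ∈ D, 0 ≤ ⟪A v, v⟫)
    (hmax : ∀ h : H, ∃ w ∈ D, w + A w = h)
    (hJD : ∀ lam : ℝ, 0 < lam → ∀ h, J lam h ∈ D)
    (hJres : ∀ lam : ℝ, 0 < lam → ∀ h, J lam h + lam • A (J lam h) = h) (w : H) :
    Tendsto (fun lam => J lam w) (𝓝[>] 0) (𝓝 w) := by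
  rw [Metric.tendsto_nhds]
  intro ε hε
  obtain ⟨u, hu, hwu⟩ : ∃ u ∈ D, dist w u < ε / 3 :=
    Metric.mem_closure_iff.1 (dense_of_surjective_add hmono hmax w) _ (by positivity)
  have hsmall : ∀ᶠ lam in 𝓝[>] (0 : ℝ), lam * ‖A u‖ < ε / 3 := by
    have : Tendsto (fun lam : ℝ => lam * ‖A u‖) (𝓝[>] 0) (𝓝 0) :=
      ((continuous_id.mul continuous_const).tendsto' 0 0 (zero_mul _)).mono_left
        nhdsWithin_le_nhds
    exact this.eventually (gt_mem_nhds (by positivity))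
  filter_upwards [self_mem_nhdsWithin, hsmall] with lam (hlam : 0 < lam) hlamu
  have hJu : ‖J lam u - u‖ ≤ lam * ‖A u‖ := by
    rw [← norm_neg, neg_sub, ← smul_resolvent_apply_map hmono hJD hJres hlam hu, norm_smul,
      Real.norm_of_nonneg hlam.le]
    exact mul_le_mul_of_nonneg_left (norm_resolvent_apply_le hmono hJD hJres hlam _) hlam.le
  have hJwu := norm_resolvent_apply_le hmono hJD hJres hlam (w - u)
  rw [dist_eq_norm] at hwu ⊢
  calc ‖J lam w - w‖ = ‖J lam (w - u) + (J lam u - u) - (w - u)‖ := by rw [map_sub]; abel_nf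
    _ ≤ ‖J lam (w - u)‖ + ‖J lam u - u‖ + ‖w - u‖ := norm_sub_le_of_le (norm_add_le _ _) le_rfl
    _ < ε := by linarith

end Resolvent

namespace MeasureTheory

variable {O : Type*} [MeasurableSpace O] {μ : Measure O}

def IsSubMarkovian {p : ℝ≥0∞} [Fact (1 ≤ p)] (T : Lp ℝ p μ →L[ℝ] Lp ℝ p μ) : Prop :=
  ∀ φ : Lp ℝ p μ, (∀ᵐ x ∂μ, 0 ≤ φ x ∧ φ x ≤ 1) → ∀ᵐ x ∂μ, 0 ≤ T φ x ∧ T φ x ≤ 1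

def IsL1Contraction {p : ℝ≥0∞} [Fact (1 ≤ p)] (T : Lp ℝ p μ →L[ℝ] Lp ℝ p μ) : Prop :=
  ∀ φ : Lp ℝ p μ, eLpNorm (T φ) 1 μ ≤ eLpNorm φ 1 μ

namespace IsSubMarkovian

variable {p : ℝ≥0∞} [Fact (1 ≤ p)] {T : Lp ℝ p μ →L[ℝ] Lp ℝ p μ}

theorem ae_mem_Icc (hT : IsSubMarkovian T) {c : ℝ} (hc : 0 < c) {φ : Lp ℝ p μ}
    (hφ : ∀ᵐ x ∂μ, 0 ≤ φ x ∧ φ x ≤ c) : ∀ᵐ x ∂μ, 0 ≤ T φ x ∧ T φ x ≤ c := by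
  have hscaled := hT (c⁻¹ • φ) <| by
    filter_upwards [Lp.coeFn_smul c⁻¹ φ, hφ] with x hx hφx
    rw [hx, Pi.smul_apply, smul_eq_mul]
    exact ⟨by positivity [hφx.1], (inv_mul_le_one₀ hc).2 hφx.2⟩
  rw [map_smul] at hscaled
  filter_upwards [Lp.coeFn_smul c⁻¹ (T φ), hscaled] with x hx hTx
  rw [hx, Pi.smul_apply, smul_eq_mul] at hTx
  exact ⟨nonneg_of_mul_nonneg_right hTx.1 (inv_pos.2 hc), (inv_mul_le_one₀ hc).1 hTx.2⟩

/-- Nonnegative simple functions, which are bounded, are dense in the nonnegative cone. -/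
theorem nonneg (hT : IsSubMarkovian T) (hp : p ≠ ∞) {g : Lp ℝ p μ} (hg : 0 ≤ g) : 0 ≤ T g := by
  refine (Lp.simpleFunc.denseRange_coeSimpleFuncNonnegToLpNonneg p μ ℝ hp).induction_on
    (p := fun g => 0 ≤ T g) ⟨g, hg⟩
    (isClosed_le continuous_const (T.continuous.comp continuous_subtype_val)) ?_
  rintro ⟨s, hs⟩
  change 0 ≤ T (s : Lp ℝ p μ)
  obtain ⟨s', hs'0, hss'⟩ := Lp.simpleFunc.exists_simpleFunc_nonneg_ae_eq hs
  obtain ⟨C, hC⟩ := s'.exists_forall_norm_le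
  rw [← Lp.coeFn_nonneg]
  refine (hT.ae_mem_Icc (c := max C 1) (by positivity) ?_).mono fun x hx => hx.1
  filter_upwards [hss'] with x hx
  rw [hx]
  exact ⟨hs'0 x, (le_abs_self _).trans ((hC x).trans (le_max_left _ _))⟩

theorem ae_le_of_ae_le (hT : IsSubMarkovian T) (hp : p ≠ ∞) {c : ℝ} (hc : 0 < c)
    {φ : Lp ℝ p μ} (hφ : ∀ᵐ x ∂μ, φ x ≤ c) : ∀ᵐ x ∂μ, T φ x ≤ c := by
  have hpos : ∀ᵐ x ∂μ, 0 ≤ T φ⁺ x ∧ T φ⁺ x ≤ c := by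
    refine hT.ae_mem_Icc hc ?_
    filter_upwards [Lp.coeFn_sup φ 0, Lp.coeFn_zero ℝ p μ, hφ] with x hsup hzero hx
    rw [posPart_def, hsup, Pi.sup_apply, hzero, Pi.zero_apply]
    exact ⟨le_max_right _ _, max_le hx hc.le⟩
  have hneg : ∀ᵐ x ∂μ, 0 ≤ T φ⁻ x :=
    (Lp.coeFn_nonneg _).2 (hT.nonneg hp (negPart_nonneg φ)) |>.mono fun x hx => hx
  have hsplit : T φ = T φ⁺ - T φ⁻ := by rw [← map_sub, posPart_sub_negPart]
  filter_upwards [hpos, hneg, Lp.coeFn_sub (T φ⁺) (T φ⁻)] with x hx hx' hsub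
  rw [hsplit, hsub, Pi.sub_apply]
  linarith [hx.2]

end IsSubMarkovian

theorem integrable_max_sub_const {f : O → ℝ} (hf : MemLp f 2 μ) {t : ℝ} (ht : 0 < t) :
    Integrable (fun x => max (f x - t) 0) μ := by
  refine (hf.integrable_sq.div_const t).mono'
    ((hf.1.sub aestronglyMeasurable_const).sup aestronglyMeasurable_const) (.of_forall fun x => ?_)
  rw [Real.norm_of_nonneg (le_max_right _ _), le_div_iff₀ ht]
  rcases le_total (f x) t with h | h
  · rw [max_eq_right (by linarith)]; nlinarith
  · rw [max_eq_left (by linarith)]; nlinarith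

theorem integrableOn_setOf_le {f g : O → ℝ} (hf : MemLp f 2 μ) (hg : MemLp g 2 μ) {t : ℝ}
    (ht : 0 < t) : IntegrableOn g {x | t ≤ f x} μ := by
  refine ((hf.integrable_mul hg).norm.div_const t).integrableOn.mono' hg.1.restrict ?_
  filter_upwards [ae_restrict_mem₀ (nullMeasurableSet_le aemeasurable_const hf.1.aemeasurable)]
    with x (hx : t ≤ f x)
  rw [le_div_iff₀ ht, Pi.mul_apply, norm_mul, Real.norm_eq_abs (f x)]
  nlinarith [norm_nonneg (g x), le_abs_self (f x)]

section L2

variable {T : Lp ℝ 2 μ →L[ℝ] Lp ℝ 2 μ}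

theorem integral_max_apply_sub_le (hT : IsSubMarkovian T) (hT1 : IsL1Contraction T)
    (f : Lp ℝ 2 μ) {t : ℝ} (ht : 0 < t) :
    ∫ x, max (T f x - t) 0 ∂μ ≤ ∫ x, max (f x - t) 0 ∂μ := by
  have hPf : Integrable (fun x => max (f x - t) 0) μ :=
    integrable_max_sub_const (Lp.memLp f) ht
  have hPf1 := (memLp_one_iff_integrable.2 hPf).2
  have hP : MemLp (fun x => max (f x - t) 0) 2 μ :=
    (Lp.memLp f).of_le hPf.1 (.of_forall fun x => by
      rw [Real.norm_of_nonneg (le_max_right _ _), Real.norm_eq_abs]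
      exact max_le (by linarith [le_abs_self (f x)]) (abs_nonneg _))
  set P := hP.toLp _
  have hQ : ∀ᵐ x ∂μ, T (f - P) x ≤ t := by
    refine hT.ae_le_of_ae_le ENNReal.ofNat_ne_top ht ?_
    filter_upwards [Lp.coeFn_sub f P, hP.coeFn_toLp] with x hsub hPx
    rw [hsub, Pi.sub_apply, hPx]
    linarith [le_max_left (f x - t) 0]
  have hnormP : eLpNorm (T P) 1 μ ≤ eLpNorm (fun x => max (f x - t) 0) 1 μ :=
    (hT1 P).trans_eq (eLpNorm_congr_ae hP.coeFn_toLp)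
  have hTP : Integrable (T P) μ :=
    memLp_one_iff_integrable.1 ⟨Lp.aestronglyMeasurable _, hnormP.trans_lt hPf1⟩
  calc ∫ x, max (T f x - t) 0 ∂μ ≤ ∫ x, ‖T P x‖ ∂μ := by
        refine integral_mono_of_nonneg (.of_forall fun x => le_max_right _ _) hTP.norm ?_
        have hsplit : T f = T P + T (f - P) := by rw [← map_add, add_sub_cancel]
        filter_upwards [hQ, Lp.coeFn_add (T P) (T (f - P))] with x hx hadd
        rw [hsplit, hadd, Pi.add_apply, Real.norm_eq_abs]
        exact max_le (by linarith [le_abs_self (T P x)]) (abs_nonneg _)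
    _ = (eLpNorm (T P) 1 μ).toReal := by
        rw [integral_norm_eq_lintegral_enorm (Lp.aestronglyMeasurable _),
          eLpNorm_one_eq_lintegral_enorm]
    _ ≤ (eLpNorm (fun x => max (f x - t) 0) 1 μ).toReal :=
        ENNReal.toReal_mono hPf1.ne hnormP
    _ = ∫ x, max (f x - t) 0 ∂μ := by
        rw [eLpNorm_one_eq_lintegral_enorm, ← integral_norm_eq_lintegral_enorm hPf.1]
        simp_rw [Real.norm_of_nonneg (le_max_right _ _)]

theorem setIntegral_sub_apply_nonneg (hT : IsSubMarkovian T) (hT1 : IsL1Contraction T)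
    (f : Lp ℝ 2 μ) {t : ℝ} (ht : 0 < t) : 0 ≤ ∫ x in {x | t ≤ f x}, (f x - T f x) ∂μ := by
  have hS : MeasurableSet {x | t ≤ f x} :=
    measurableSet_le measurable_const (Lp.stronglyMeasurable f).measurable
  have hint : IntegrableOn (fun x => f x - T f x) {x | t ≤ f x} μ :=
    integrableOn_setOf_le (Lp.memLp f) ((Lp.memLp f).sub (Lp.memLp (T f))) ht
  have hf := integrable_max_sub_const (Lp.memLp f) ht
  have hTf := integrable_max_sub_const (Lp.memLp (T f)) ht
  refine (sub_nonneg.2 (integral_max_apply_sub_le hT hT1 f ht)).trans ?_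
  rw [← integral_sub hf hTf, ← integral_indicator hS]
  refine integral_mono (hf.sub hTf) ((integrable_indicator_iff hS).2 hint) fun x => ?_
  simp only [Set.indicator_apply, Set.mem_ofPred_eq]
  split_ifs with h
  · rw [max_eq_left (by linarith)]
    linarith [le_max_left (T f x - t) 0]
  · rw [max_eq_right (by linarith)]
    linarith [le_max_right (T f x - t) 0]

variable {β : ℝ → ℝ}

theorem setIntegral_sub_apply_nonneg_of_monotone (hT : IsSubMarkovian T)
    (hT1 : IsL1Contraction T) (f : Lp ℝ 2 μ) (hβm : Monotone β) (hβc : Continuous β)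
    (hβ0 : β 0 = 0) {c : ℝ} (hc : 0 < c) :
    0 ≤ ∫ x in {x | c ≤ β (f x)}, (f x - T f x) ∂μ := by
  change 0 ≤ ∫ x in f ⁻¹' {r | c ≤ β r}, (f x - T f x) ∂μ
  rcases hβm.setOf_le_eq_empty_or_Ici hβc hβ0 hc with h | ⟨t, ht, h⟩
  · simp [h]
  · exact h ▸ setIntegral_sub_apply_nonneg hT hT1 f ht

theorem integral_mul_stepApprox_nonneg (hT : IsSubMarkovian T) (hT1 : IsL1Contraction T)
    (f : Lp ℝ 2 μ) (hβm : Monotone β) (hβc : Continuous β) (hβ0 : β 0 = 0)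
    (hβf : MemLp (fun x => β (f x)) 2 μ) (n : ℕ) :
    0 ≤ ∫ x, (f x - T f x) * stepApprox n (β (f x)) ∂μ := by
  set S : ℕ → Set O := fun k => {x | (k : ℝ) / n ≤ β (f x)}
  have hS : ∀ k, MeasurableSet (S k) := fun k =>
    measurableSet_le measurable_const (hβc.measurable.comp (Lp.stronglyMeasurable f).measurable)
  have hpos : ∀ k ∈ Finset.Icc 1 (n ^ 2), (0 : ℝ) < k / n := fun k hk => by
    obtain ⟨hk1, hkn⟩ := Finset.mem_Icc.1 hk
    have : 0 < n := Nat.pos_of_ne_zero (by rintro rfl; simp at hkn; omega)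
    positivity
  have hexpand : ∀ x, (f x - T f x) * stepApprox n (β (f x)) =
      (n : ℝ)⁻¹ * ∑ k ∈ Finset.Icc 1 (n ^ 2), (S k).indicator (fun x => f x - T f x) x := by
    intro x
    rw [stepApprox, mul_left_comm, Finset.mul_sum]
    simp only [Set.indicator_apply, S, Set.mem_ofPred_eq, mul_ite, mul_one, mul_zero]
  have hg : MemLp (fun x => f x - T f x) 2 μ := (Lp.memLp f).sub (Lp.memLp (T f))
  simp_rw [hexpand]
  rw [integral_const_mul, integral_finsetSum _ fun k hk => (integrable_indicator_iff (hS k)).2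
    (integrableOn_setOf_le hβf hg (hpos k hk))]
  refine mul_nonneg (by positivity) (Finset.sum_nonneg fun k hk => ?_)
  rw [integral_indicator (hS k)]
  exact setIntegral_sub_apply_nonneg_of_monotone hT hT1 f hβm hβc hβ0 (hpos k hk)

theorem inner_sub_apply_nonneg_of_nonneg (hT : IsSubMarkovian T) (hT1 : IsL1Contraction T)
    (f : Lp ℝ 2 μ) (hβm : Monotone β) (hβc : Continuous β) (hβ0 : β 0 = 0)
    (hβnn : ∀ r, 0 ≤ β r) {b : Lp ℝ 2 μ} (hb : b =ᵐ[μ] fun x => β (f x)) :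
    0 ≤ ⟪f - T f, b⟫ := by
  have hβf : MemLp (fun x => β (f x)) 2 μ := (Lp.memLp b).ae_eq hb
  have hg : MemLp (fun x => f x - T f x) 2 μ := (Lp.memLp f).sub (Lp.memLp (T f))
  have hinner : ⟪f - T f, b⟫ = ∫ x, (f x - T f x) * β (f x) ∂μ := by
    rw [L2.inner_def]
    refine integral_congr_ae ?_
    filter_upwards [Lp.coeFn_sub f (T f), hb] with x hsub hbx
    rw [hsub, hbx, Pi.sub_apply, real_inner_comm, RCLike.inner_apply, conj_trivial]
  have hlim : Tendsto (fun n => ∫ x, (f x - T f x) * stepApprox n (β (f x)) ∂μ) atTop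
      (𝓝 (∫ x, (f x - T f x) * β (f x) ∂μ)) := by
    refine tendsto_integral_of_dominated_convergence _
      (fun n => hg.1.mul
        ((measurable_stepApprox n).comp_aemeasurable hβf.1.aemeasurable).aestronglyMeasurable)
      (hg.integrable_mul hβf).norm (fun n => .of_forall fun x => ?_) (.of_forall fun x => ?_)
    · obtain ⟨h0, hle⟩ := stepApprox_mem_Icc n (hβnn (f x))
      rw [Pi.mul_apply, norm_mul, norm_mul, Real.norm_of_nonneg h0,
        Real.norm_of_nonneg (hβnn _)]
      exact mul_le_mul_of_nonneg_left hle (norm_nonneg _)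
    · exact (tendsto_stepApprox (hβnn (f x))).const_mul _
  rw [hinner]
  exact ge_of_tendsto' hlim (integral_mul_stepApprox_nonneg hT hT1 f hβm hβc hβ0 hβf)

/-- The negative part of `β ∘ f` is the positive part of `r ↦ -β (-r)` evaluated at `-f`. -/
theorem inner_sub_apply_nonneg (hT : IsSubMarkovian T) (hT1 : IsL1Contraction T)
    (f : Lp ℝ 2 μ) (hβm : Monotone β) (hβc : Continuous β) (hβ0 : β 0 = 0)
    {b : Lp ℝ 2 μ} (hb : b =ᵐ[μ] fun x => β (f x)) : 0 ≤ ⟪f - T f, b⟫ := by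
  have hpos : 0 ≤ ⟪f - T f, b⁺⟫ := by
    refine inner_sub_apply_nonneg_of_nonneg hT hT1 f (β := fun r => max (β r) 0)
      (hβm.sup monotone_const) (by fun_prop) (by simp [hβ0]) (fun r => le_max_right _ _) ?_
    filter_upwards [Lp.coeFn_sup b 0, Lp.coeFn_zero ℝ 2 μ, hb] with x hsup hzero hbx
    rw [posPart_def, hsup, Pi.sup_apply, hzero, hbx, Pi.zero_apply]
  have hneg : 0 ≤ ⟪-f - T (-f), b⁻⟫ := by
    refine inner_sub_apply_nonneg_of_nonneg hT hT1 (-f) (β := fun r => max (-β (-r)) 0)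
      (fun r s hrs => max_le_max_right 0 (neg_le_neg (hβm (neg_le_neg hrs)))) (by fun_prop)
      (by simp [hβ0]) (fun r => le_max_right _ _) ?_
    filter_upwards [Lp.coeFn_sup (-b) 0, Lp.coeFn_neg b, Lp.coeFn_zero ℝ 2 μ, Lp.coeFn_neg f, hb]
      with x hsup hnegb hzero hnegf hbx
    rw [negPart_def, hsup, Pi.sup_apply, hnegb, hzero, hnegf, Pi.neg_apply, Pi.neg_apply, neg_neg,
      hbx, Pi.zero_apply]
  have hsplit : ⟪f - T f, b⟫ = ⟪f - T f, b⁺⟫ + ⟪-f - T (-f), b⁻⟫ := by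
    rw [show -f - T (-f) = -(f - T f) by rw [map_neg]; abel, inner_neg_left, ← sub_eq_add_neg,
      ← inner_sub_right, posPart_sub_negPart]
  linarith

end L2

end MeasureTheory

theorem inner_Av_beta_nonneg_general
    {O : Type*} [MeasurableSpace O] (μ : Measure O)
    (D : Submodule ℝ (Lp ℝ 2 μ)) (A : Lp ℝ 2 μ →ₗ[ℝ] Lp ℝ 2 μ)
    -- A is monotone on D
    (hmono : ∀ v ∈ D, 0 ≤ ⟪A v, v⟫)
    -- maximality: I + A maps D onto H
    (hmax : ∀ h : Lp ℝ 2 μ, ∃ w ∈ D, w + A w = h)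
    -- the resolvent family J λ = (I + λ A)⁻¹
    (J : ℝ → (Lp ℝ 2 μ →L[ℝ] Lp ℝ 2 μ))
    (hJD : ∀ lam : ℝ, 0 < lam → ∀ h, J lam h ∈ D)
    (hJres : ∀ lam : ℝ, 0 < lam → ∀ h, J lam h + lam • A (J lam h) = h)
    -- sub-Markovianity of the resolvent
    (hJsubMarkov : ∀ lam : ℝ, 0 < lam → ∀ φ : Lp ℝ 2 μ,
      (∀ᵐ x ∂μ, 0 ≤ φ x ∧ φ x ≤ 1) → (∀ᵐ x ∂μ, 0 ≤ J lam φ x ∧ J lam φ x ≤ 1))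
    -- the resolvent is an L¹-contraction
    (hJL1contr : ∀ lam : ℝ, 0 < lam → ∀ φ : Lp ℝ 2 μ,
      eLpNorm (⇑(J lam φ)) 1 μ ≤ eLpNorm (⇑φ) 1 μ)
    -- β : ℝ → ℝ continuous, nondecreasing, bounded, β 0 = 0
    (β : ℝ → ℝ) (hβc : Continuous β) (hβm : Monotone β)
    (hβ0 : β 0 = 0)
    -- v ∈ D(A), and βv ∈ L² represents β ∘ v
    (v : Lp ℝ 2 μ) (hv : v ∈ D)
    (βv : Lp ℝ 2 μ) (hβv : ⇑βv =ᵐ[μ] fun x => β (v x)) :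
    0 ≤ ⟪A v, βv⟫ := by
  have hresolvent : ∀ lam > 0, 0 ≤ ⟪J lam (A v), βv⟫ := fun lam hlam => by
    refine nonneg_of_mul_nonneg_right ?_ hlam
    rw [← real_inner_smul_left, smul_resolvent_apply_map hmono hJD hJres hlam hv]
    exact inner_sub_apply_nonneg (hJsubMarkov lam hlam) (hJL1contr lam hlam) v hβm hβc hβ0 hβv
  exact ge_of_tendsto
    ((tendsto_resolvent_apply hmono hmax hJD hJres (A v)).inner tendsto_const_nhds)
    (eventually_nhdsWithin_of_forall hresolvent)

/-- Brézis–Strauss type inequality.  Let `H = L²(O, μ)` and let `A`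
be a linear maximal monotone operator on `H` (with domain `D`) whose resolvent
`J λ = (I + λ A)⁻¹` is sub-Markovian and a contraction in the `L¹(O,μ)`-norm.  Let
`β : ℝ → ℝ` be continuous, nondecreasing, bounded, with `β 0 = 0`.  Then for every
`v ∈ D(A)`, `⟨A v, β ∘ v⟩_{L²} ≥ 0`. -/
theorem inner_Av_beta_nonneg
    {O : Type*} [MeasurableSpace O] (μ : Measure O)
    (D : Submodule ℝ (Lp ℝ 2 μ)) (A : Lp ℝ 2 μ →ₗ[ℝ] Lp ℝ 2 μ)
    -- A is monotone on D
    (hmono : ∀ v ∈ D, 0 ≤ ⟪A v, v⟫)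
    -- maximality: I + A maps D onto H
    (hmax : ∀ h : Lp ℝ 2 μ, ∃ w ∈ D, w + A w = h)
    -- the resolvent family J λ = (I + λ A)⁻¹
    (J : ℝ → (Lp ℝ 2 μ →L[ℝ] Lp ℝ 2 μ))
    (hJD : ∀ lam : ℝ, 0 < lam → ∀ h, J lam h ∈ D)
    (hJres : ∀ lam : ℝ, 0 < lam → ∀ h, J lam h + lam • A (J lam h) = h)
    -- sub-Markovianity of the resolvent
    (hJsubMarkov : ∀ lam : ℝ, 0 < lam → ∀ φ : Lp ℝ 2 μ,
      (∀ᵐ x ∂μ, 0 ≤ φ x ∧ φ x ≤ 1) → (∀ᵐ x ∂μ, 0 ≤ J lam φ x ∧ J lam φ x ≤ 1))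
    -- the resolvent is an L¹-contraction
    (hJL1contr : ∀ lam : ℝ, 0 < lam → ∀ φ : Lp ℝ 2 μ,
      eLpNorm (⇑(J lam φ)) 1 μ ≤ eLpNorm (⇑φ) 1 μ)
    -- β : ℝ → ℝ continuous, nondecreasing, bounded, β 0 = 0
    (β : ℝ → ℝ) (hβc : Continuous β) (hβm : Monotone β)
    (hβb : ∃ C : ℝ, ∀ r : ℝ, |β r| ≤ C) (hβ0 : β 0 = 0)
    -- v ∈ D(A), and βv ∈ L² represents β ∘ v
    (v : Lp ℝ 2 μ) (hv : v ∈ D)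
    (βv : Lp ℝ 2 μ) (hβv : ⇑βv =ᵐ[μ] fun x => β (v x)) :
    0 ≤ ⟪A v, βv⟫ :=
  inner_Av_beta_nonneg_general μ D A hmono hmax J hJD hJres hJsubMarkov hJL1contr β hβc hβm hβ0 v hv
    βv hβv
end

section
/- Let A be a linear maximal monotone operator on L²(O, μ) with sub-Markovian resolvent J_λ that contracts the L¹-norm, let j : ℝ → [0,∞) be a convex differentiable function with j(0) = 0, and let v ∈ D(A) with j(v) ∈ L¹(O,μ) and j'(v) ∈ L²(O,μ). Then for every λ > 0, the Yosida approximation A_λ = (1/λ)(I − J_λ) satisfies ⟨A_λ v, j'(v)⟩_{L²} ≥ (1/λ)(‖j(v)‖_{L¹} − ‖j(J_λ v)‖_{L¹}). -/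
open MeasureTheory Filter
open scoped ENNReal RealInnerProductSpace

/-!
The gradient inequality of a convex function, `j a - j b ≤ j'(a) (a - b)`, holds pointwise for
`a = v x` and `b = J_λ v x`; integrating it gives `∫ j(v) - ∫ j(J_λ v) ≤ ⟪v - J_λ v, j'(v)⟫`,
and multiplying by `1/λ > 0` gives the claim.
-/

theorem ConvexOn.sub_le_mul_sub_of_hasDerivAt {S : Set ℝ} {f : ℝ → ℝ} {f' x y : ℝ}
    (hf : ConvexOn ℝ S f) (hx : x ∈ S) (hy : y ∈ S) (hf' : HasDerivAt f f' x) :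
    f x - f y ≤ f' * (x - y) := by
  rcases lt_trichotomy x y with hxy | rfl | hxy
  · have hslope := hf.le_slope_of_hasDerivAt hx hy hxy hf'
    rw [slope_def_field, le_div_iff₀ (sub_pos.mpr hxy)] at hslope
    linarith
  · simp
  · have hslope := hf.slope_le_of_hasDerivAt hy hx hxy hf'
    rwa [slope_def_field, div_le_iff₀ (sub_pos.mpr hxy)] at hslope

theorem integral_sub_integral_le_inner_of_convexOn {O : Type*} [MeasurableSpace O]
    {μ : Measure O} {j j' : ℝ → ℝ} (hj : ConvexOn ℝ Set.univ j)
    (hj' : ∀ r, HasDerivAt j (j' r) r) {f g w : Lp ℝ 2 μ}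
    (hf : Integrable (fun x => j (f x)) μ) (hg : Integrable (fun x => j (g x)) μ)
    (hw : ⇑w =ᵐ[μ] fun x => j' (f x)) :
    (∫ x, j (f x) ∂μ) - ∫ x, j (g x) ∂μ ≤ ⟪f - g, w⟫ := by
  rw [← integral_sub hf hg, L2.inner_def]
  refine integral_mono_ae (hf.sub hg) (L2.integrable_inner _ _) ?_
  filter_upwards [hw, Lp.coeFn_sub f g] with x hwx hfgx
  rw [real_inner_eq_re_inner, RCLike.inner_apply, hfgx, hwx]
  simpa [mul_comm] using
    hj.sub_le_mul_sub_of_hasDerivAt (Set.mem_univ (f x)) (Set.mem_univ (g x)) (hj' (f x))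

theorem yosida_inner_ge_L1_difference_general
    {O : Type*} [MeasurableSpace O] (μ : Measure O)
    (J : ℝ → (Lp ℝ 2 μ →L[ℝ] Lp ℝ 2 μ))
    -- j : ℝ → ℝ₊ convex, differentiable with derivative j', j 0 = 0
    (j j' : ℝ → ℝ) (hjconv : ConvexOn ℝ Set.univ j)
    (hj' : ∀ r : ℝ, HasDerivAt j (j' r) r)
    -- v ∈ D(A), j(v) ∈ L¹, j'(v) ∈ L² (represented by w)
    (v : Lp ℝ 2 μ)
    (hjv : Integrable (fun x => j (v x)) μ)
    (w : Lp ℝ 2 μ) (hw : ⇑w =ᵐ[μ] fun x => j' (v x))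
    (lam : ℝ) (hlam : 0 < lam)
    -- j(J_λ v) ∈ L¹ so that the right-hand side makes sense
    (hjJv : Integrable (fun x => j (J lam v x)) μ) :
    (1 / lam) * ((∫ x, j (v x) ∂μ) - ∫ x, j (J lam v x) ∂μ)
      ≤ ⟪(1 / lam) • (v - J lam v), w⟫ := by
  rw [real_inner_smul_left]
  exact mul_le_mul_of_nonneg_left
    (integral_sub_integral_le_inner_of_convexOn hjconv hj' hjv hjJv hw) (by positivity)

/-- Let `A` be a linear maximal monotone operator on `L²(O,μ)` with
sub-Markovian resolvent `J λ` that contracts the `L¹`-norm, let `j : ℝ → [0,∞)` be a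
convex differentiable function with `j 0 = 0`, and let `v ∈ D(A)` with `j ∘ v ∈ L¹`
and `j' ∘ v ∈ L²`.  Then for every `λ > 0`, the Yosida approximation
`A_λ = (1/λ)(I - J λ)` satisfies
`⟨A_λ v, j'(v)⟩_{L²} ≥ (1/λ)(‖j(v)‖_{L¹} - ‖j(J_λ v)‖_{L¹})`. -/
theorem yosida_inner_ge_L1_difference
    {O : Type*} [MeasurableSpace O] (μ : Measure O)
    (D : Submodule ℝ (Lp ℝ 2 μ)) (A : Lp ℝ 2 μ →ₗ[ℝ] Lp ℝ 2 μ)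
    (hmono : ∀ w ∈ D, 0 ≤ ⟪A w, w⟫)
    (hmax : ∀ h : Lp ℝ 2 μ, ∃ w ∈ D, w + A w = h)
    (J : ℝ → (Lp ℝ 2 μ →L[ℝ] Lp ℝ 2 μ))
    (hJD : ∀ lam : ℝ, 0 < lam → ∀ h, J lam h ∈ D)
    (hJres : ∀ lam : ℝ, 0 < lam → ∀ h, J lam h + lam • A (J lam h) = h)
    (hJsubMarkov : ∀ lam : ℝ, 0 < lam → ∀ φ : Lp ℝ 2 μ,
      (∀ᵐ x ∂μ, 0 ≤ φ x ∧ φ x ≤ 1) → (∀ᵐ x ∂μ, 0 ≤ J lam φ x ∧ J lam φ x ≤ 1))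
    (hJL1contr : ∀ lam : ℝ, 0 < lam → ∀ φ : Lp ℝ 2 μ,
      eLpNorm (⇑(J lam φ)) 1 μ ≤ eLpNorm (⇑φ) 1 μ)
    -- j : ℝ → ℝ₊ convex, differentiable with derivative j', j 0 = 0
    (j j' : ℝ → ℝ) (hjconv : ConvexOn ℝ Set.univ j)
    (hj' : ∀ r : ℝ, HasDerivAt j (j' r) r)
    (hjpos : ∀ r : ℝ, 0 ≤ j r) (hj0 : j 0 = 0)
    -- v ∈ D(A), j(v) ∈ L¹, j'(v) ∈ L² (represented by w)
    (v : Lp ℝ 2 μ) (hv : v ∈ D)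
    (hjv : Integrable (fun x => j (v x)) μ)
    (w : Lp ℝ 2 μ) (hw : ⇑w =ᵐ[μ] fun x => j' (v x))
    (lam : ℝ) (hlam : 0 < lam)
    -- j(J_λ v) ∈ L¹ so that the right-hand side makes sense
    (hjJv : Integrable (fun x => j (J lam v x)) μ) :
    (1 / lam) * ((∫ x, j (v x) ∂μ) - ∫ x, j (J lam v x) ∂μ)
      ≤ ⟪(1 / lam) • (v - J lam v), w⟫ :=
  yosida_inner_ge_L1_difference_general μ J j j' hjconv hj' v hjv w hw lam hlam hjJv
end

section
/- Fix α > 0, λ > 0, and let H = L²(ℝ₊, e^{-αx}dx). For y ∈ H with 0 ≤ y ≤ 1 a.e., let y_λ ∈ H be an absolutely continuous solution of y_λ − λ y_λ' + λα y_λ = y with y_λ' ∈ H. Then y_λ ≤ 1 a.e. in ℝ₊. -/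
/-!
With `c = α + λ⁻¹` the equation reads `y_λ' = c y_λ - y / λ`, and `y ≤ 1 ≤ 1 + λα` gives
`(y_λ - 1)' ≥ c (y_λ - 1)`, so `e^{-cx} (y_λ(x) - 1)` is nondecreasing on `ℝ₊`. If
`y_λ(x₀) > 1`, then `y_λ(x) ≥ δ e^{cx}` on `[x₀, ∞)` for some `δ > 0`; as `2c > α`, this bounds
`y_λ² e^{-αx}` below by `δ²` there, contradicting `y_λ ∈ L²_{-α}`.
-/

open MeasureTheory Set Real

theorem AbsolutelyContinuousOnInterval.le_of_ae_deriv_nonneg {f : ℝ → ℝ} {a b : ℝ} (hab : a ≤ b)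
    (hf : AbsolutelyContinuousOnInterval f a b) (hf' : ∀ᵐ x, x ∈ Icc a b → 0 ≤ deriv f x) :
    f a ≤ f b := by
  rw [← sub_nonneg, ← hf.integral_deriv_eq_sub]
  exact intervalIntegral.integral_nonneg_of_ae_restrict hab
    ((ae_restrict_iff' measurableSet_Icc).2 hf')

theorem monotoneOn_exp_neg_mul_of_mul_le_deriv {c : ℝ} {u f : ℝ → ℝ}
    (hf : ∀ x, IntegrableOn f (Ioc 0 x)) (hu : ∀ x, 0 ≤ x → u x = u 0 + ∫ t in (0:ℝ)..x, f t)
    (hcu : ∀ᵐ x ∂volume.restrict (Ici 0), c * u x ≤ f x) :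
    MonotoneOn (fun x => exp (-(c * x)) * u x) (Ici 0) := by
  intro a (ha : 0 ≤ a) b (hb : 0 ≤ b) hab
  set U := fun x => u 0 + ∫ t in (0:ℝ)..x, f t
  have hfi : IntervalIntegrable f volume 0 b :=
    (intervalIntegrable_iff_integrableOn_Ioc_of_le hb).2 (hf b)
  have hac : AbsolutelyContinuousOnInterval (fun x => exp (-(c * x)) * U x) 0 b :=
    (contDiff_exp.comp (contDiff_const.mul contDiff_id).neg).contDiffOn
      |>.absolutelyContinuousOnInterval |>.fun_mul <|
      contDiffOn_const.absolutelyContinuousOnInterval.fun_add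
        (hfi.absolutelyContinuousOnInterval_intervalIntegral left_mem_uIcc)
  have hsub : uIcc a b ⊆ uIcc 0 b := by
    rw [uIcc_of_le hab, uIcc_of_le hb]; exact Icc_subset_Icc ha le_rfl
  simp only [hu a ha, hu b hb]
  refine (hac.mono hsub).le_of_ae_deriv_nonneg hab ?_
  filter_upwards [hfi.ae_hasDerivAt_integral, (ae_restrict_iff' measurableSet_Ici).1 hcu]
    with x hU hcux hx
  have hx0b : x ∈ uIcc 0 b := hsub (Icc_subset_uIcc hx)
  have hexp : HasDerivAt (fun x => exp (-(c * x))) (exp (-(c * x)) * -(c * 1)) x :=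
    ((hasDerivAt_id x).const_mul c).neg.exp
  have hx0 : 0 ≤ x := ha.trans hx.1
  rw [(hexp.fun_mul ((hU hx0b 0 left_mem_uIcc).const_add (u 0))).deriv, ← hu x hx0]
  nlinarith [hcux hx0, exp_pos (-(c * x))]

theorem not_integrableOn_Ici_of_pos_le {g : ℝ → ℝ} {a ε : ℝ} (hε : 0 < ε)
    (hg : ∀ x ∈ Ici a, ε ≤ g x) : ¬ IntegrableOn g (Ici a) := fun h => by
  have hconst : IntegrableOn (fun _ => ε) (Ici a) :=
    h.mono' aestronglyMeasurable_const <| (ae_restrict_iff' measurableSet_Ici).2 <|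
      ae_of_all _ fun x hx => by rw [norm_of_nonneg hε.le]; exact hg x hx
  rw [integrableOn_const_iff] at hconst
  simp [hε.ne'] at hconst

theorem not_integrableOn_sq_mul_exp_of_exp_le {g : ℝ → ℝ} {α c δ a : ℝ} (hαc : α ≤ 2 * c)
    (ha : 0 ≤ a) (hδ : 0 < δ) (hg : ∀ x ∈ Ici a, δ * exp (c * x) ≤ g x) :
    ¬ IntegrableOn (fun x => g x ^ 2 * exp (-(α * x))) (Ici a) := by
  refine not_integrableOn_Ici_of_pos_le (pow_pos hδ 2) fun x hx => ?_
  have hx0 : 0 ≤ x := ha.trans hx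
  calc δ ^ 2 ≤ δ ^ 2 * exp ((2 * c - α) * x) :=
        le_mul_of_one_le_right (by positivity) (one_le_exp (by nlinarith))
    _ = (δ * exp (c * x)) ^ 2 * exp (-(α * x)) := by
        rw [mul_pow, ← exp_nat_mul, mul_assoc, ← exp_add]; ring_nf
    _ ≤ g x ^ 2 * exp (-(α * x)) := by gcongr; exact hg x hx

theorem resolvent_subMarkov_upper_general
    (α lam : ℝ) (hα : 0 < α) (hlam : 0 < lam)
    (y yl yl' : ℝ → ℝ)
    -- y ∈ L²_{-α} with 0 ≤ y ≤ 1 a.e. on ℝ₊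
    (hy01 : ∀ᵐ x ∂(volume.restrict (Set.Ici (0:ℝ))), 0 ≤ y x ∧ y x ≤ 1)
    -- y_λ is absolutely continuous on ℝ₊ with a.e. derivative y_λ'
    (hloc : ∀ x : ℝ, IntegrableOn yl' (Set.Ioc 0 x))
    (hAC : ∀ x : ℝ, 0 ≤ x → yl x = yl 0 + ∫ t in (0:ℝ)..x, yl' t)
    -- y_λ, y_λ' ∈ L²_{-α}
    (hyl2 : IntegrableOn (fun x => yl x ^ 2 * Real.exp (-(α * x))) (Set.Ici 0))
    -- the resolvent equation y_λ - λ y_λ' + λ α y_λ = y a.e. on ℝ₊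
    (heq : ∀ᵐ x ∂(volume.restrict (Set.Ici (0:ℝ))),
      yl x - lam * yl' x + lam * α * yl x = y x) :
    ∀ᵐ x ∂(volume.restrict (Set.Ici (0:ℝ))), yl x ≤ 1 := by
  set c := α + lam⁻¹
  have hmono : MonotoneOn (fun x => exp (-(c * x)) * (yl x - 1)) (Ici 0) := by
    refine monotoneOn_exp_neg_mul_of_mul_le_deriv hloc (fun x hx => by rw [hAC x hx]; ring) ?_
    filter_upwards [hy01, heq] with x hy hx
    refine le_of_mul_le_mul_left ?_ hlam
    have : lam * (c * (yl x - 1)) = (lam * α + 1) * (yl x - 1) := by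
      simp only [c]; field_simp
    nlinarith
  refine (ae_restrict_iff' measurableSet_Ici).2 (ae_of_all _ fun x₀ hx₀ => ?_)
  by_contra! h
  have hc : α ≤ 2 * c := by have := inv_pos.2 hlam; linarith
  have hδ : 0 < exp (-(c * x₀)) * (yl x₀ - 1) := mul_pos (exp_pos _) (sub_pos.2 h)
  refine not_integrableOn_sq_mul_exp_of_exp_le hc hx₀ hδ (fun x hx => ?_)
    (hyl2.mono_set (Ici_subset_Ici.2 hx₀))
  calc exp (-(c * x₀)) * (yl x₀ - 1) * exp (c * x)
      ≤ exp (-(c * x)) * (yl x - 1) * exp (c * x) :=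
        mul_le_mul_of_nonneg_right (hmono hx₀ (mem_Ici.2 (le_trans hx₀ hx)) hx) (exp_pos _).le
    _ = yl x - 1 := by rw [mul_comm, ← mul_assoc, ← exp_add]; simp
    _ ≤ yl x := by linarith

/-- Fix `α > 0`, `λ > 0`, and let `H = L²(ℝ₊, e^{-αx}dx)`.  For
`y ∈ H` with `0 ≤ y ≤ 1` a.e. on `ℝ₊`, let `y_λ ∈ H` be an absolutely continuous
solution of `y_λ - λ y_λ' + λ α y_λ = y` with `y_λ' ∈ H`.  Then `y_λ ≤ 1` a.e. on
`ℝ₊`. -/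
theorem resolvent_subMarkov_upper
    (α lam : ℝ) (hα : 0 < α) (hlam : 0 < lam)
    (y yl yl' : ℝ → ℝ)
    -- y ∈ L²_{-α} with 0 ≤ y ≤ 1 a.e. on ℝ₊
    (hy2 : IntegrableOn (fun x => y x ^ 2 * Real.exp (-(α * x))) (Set.Ici 0))
    (hy01 : ∀ᵐ x ∂(volume.restrict (Set.Ici (0:ℝ))), 0 ≤ y x ∧ y x ≤ 1)
    -- y_λ is absolutely continuous on ℝ₊ with a.e. derivative y_λ'
    (hloc : ∀ x : ℝ, IntegrableOn yl' (Set.Ioc 0 x))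
    (hAC : ∀ x : ℝ, 0 ≤ x → yl x = yl 0 + ∫ t in (0:ℝ)..x, yl' t)
    -- y_λ, y_λ' ∈ L²_{-α}
    (hyl2 : IntegrableOn (fun x => yl x ^ 2 * Real.exp (-(α * x))) (Set.Ici 0))
    (hyl'2 : IntegrableOn (fun x => yl' x ^ 2 * Real.exp (-(α * x))) (Set.Ici 0))
    -- the resolvent equation y_λ - λ y_λ' + λ α y_λ = y a.e. on ℝ₊
    (heq : ∀ᵐ x ∂(volume.restrict (Set.Ici (0:ℝ))),
      yl x - lam * yl' x + lam * α * yl x = y x) :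
    ∀ᵐ x ∂(volume.restrict (Set.Ici (0:ℝ))), yl x ≤ 1 :=
  resolvent_subMarkov_upper_general α lam hα hlam y yl yl' hy01 hloc hAC hyl2 heq
end

section
/- Fix α > 0, λ > 0, and let H = L²(ℝ₊, e^{-αx}dx). For y ∈ H with y ≥ 0 a.e., let y_λ ∈ H be an absolutely continuous solution of y_λ − λ y_λ' + λα y_λ = y with y_λ' ∈ H. Then y_λ ≥ 0 a.e. in ℝ₊. -/
/-!
With `β = α + 1/λ`, the equation and `y ≥ 0` give `y_λ' ≤ β y_λ` a.e., so the absolutely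
continuous function `e^{-βx} y_λ(x)` has a.e. nonpositive derivative and is nonincreasing.
If `y_λ(a) < 0`, then `e^{-βx} y_λ(x) ≤ e^{-βa} y_λ(a) < 0` for `x ≥ a`, hence
`y_λ(x)² e^{-αx} ≥ (e^{-βa} y_λ(a))² e^{(2β-α)x}` is bounded below by a positive constant
(`2β - α = α + 2/λ > 0`), contradicting `y_λ ∈ L²_{-α}`.
-/
open MeasureTheory Set

theorem exp_neg_mul_mul_le_of_ae_le_mul {f g : ℝ → ℝ} {β a b c : ℝ}
    (hca : c ≤ a) (hab : a ≤ b) (hg : IntervalIntegrable g volume c b)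
    (hf : ∀ x ∈ Icc a b, f x = f c + ∫ t in c..x, g t)
    (hle : ∀ᵐ x, x ∈ Icc a b → g x ≤ β * f x) :
    Real.exp (-(β * b)) * f b ≤ Real.exp (-(β * a)) * f a := by
  set F : ℝ → ℝ := fun x => f c + ∫ t in c..x, g t
  set E : ℝ → ℝ := fun x => Real.exp (-(β * x))
  have hcb : c ∈ uIcc c b := left_mem_uIcc
  have hab_sub : uIcc a b ⊆ uIcc c b := by
    rw [uIcc_of_le hab, uIcc_of_le (hca.trans hab)]; exact Icc_subset_Icc_left hca
  have hF : AbsolutelyContinuousOnInterval F a b :=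
    (contDiffOn_const.absolutelyContinuousOnInterval.add
      (hg.absolutelyContinuousOnInterval_intervalIntegral hcb)).mono hab_sub
  have hE : AbsolutelyContinuousOnInterval E a b :=
    (by fun_prop : ContDiff ℝ 1 E).contDiffOn.absolutelyContinuousOnInterval
  have hderiv : ∀ᵐ x, x ∈ Ioc a b → deriv (E * F) x ≤ 0 := by
    filter_upwards [hg.ae_hasDerivAt_integral, hle] with x hGx hlex hx
    have hxI : x ∈ Icc a b := Ioc_subset_Icc_self hx
    have hEx : HasDerivAt E (-β * E x) x := by
      simpa [E, mul_comm] using ((hasDerivAt_id x).const_mul β).neg.exp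
    rw [(hEx.mul ((hGx (hab_sub (by rwa [uIcc_of_le hab])) c hcb).const_add (f c))).deriv,
      ← hf x hxI]
    have := hlex hxI
    have := (Real.exp_pos (-(β * x))).le
    simp only [E]
    nlinarith
  have hint : ∫ x in a..b, deriv (E * F) x ≤ 0 := by
    rw [intervalIntegral.integral_of_le hab]
    exact integral_nonpos_of_ae ((ae_restrict_iff' measurableSet_Ioc).2 hderiv)
  rw [(hE.mul hF).integral_deriv_eq_sub] at hint
  simp only [Pi.mul_apply, E, F, ← hf a ⟨le_rfl, hab⟩, ← hf b ⟨hab, le_rfl⟩] at hint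
  linarith

theorem not_integrableOn_Ici_of_forall_le {g : ℝ → ℝ} {a c : ℝ} (hc : 0 < c)
    (h : ∀ x ∈ Ici a, c ≤ g x) : ¬ IntegrableOn g (Ici a) := by
  intro hg
  have hconst : IntegrableOn (fun _ => c) (Ici a) := by
    refine hg.mono' aestronglyMeasurable_const ?_
    filter_upwards [ae_restrict_mem measurableSet_Ici] with x hx
    rw [Real.norm_of_nonneg hc.le]
    exact h x hx
  simp [integrableOn_const_iff, hc.ne'] at hconst

theorem le_mul_of_sub_mul_add_mul_eq {α lam u u' v : ℝ} (hlam : 0 < lam)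
    (h : u - lam * u' + lam * α * u = v) (hv : 0 ≤ v) : u' ≤ (α + lam⁻¹) * u := by
  have hu : lam * ((α + lam⁻¹) * u) = u + lam * α * u := by field_simp; ring
  exact le_of_mul_le_mul_left (by linarith) hlam

theorem sq_le_sq_mul_exp_neg_mul {α β m u x : ℝ} (hm : m < 0)
    (hu : Real.exp (-(β * x)) * u ≤ m) (hx : 0 ≤ x) (hαβ : α ≤ 2 * β) :
    m ^ 2 ≤ u ^ 2 * Real.exp (-(α * x)) :=
  calc m ^ 2
      ≤ (Real.exp (-(β * x)) * u) ^ 2 := by nlinarith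
    _ ≤ (Real.exp (-(β * x)) * u) ^ 2 * Real.exp ((2 * β - α) * x) :=
        le_mul_of_one_le_right (sq_nonneg _)
          (Real.one_le_exp (mul_nonneg (by linarith) hx))
    _ = u ^ 2 * Real.exp (-(α * x)) := by
        rw [mul_pow, mul_right_comm, ← Real.exp_nat_mul, ← Real.exp_add]
        ring_nf

theorem resolvent_positivity_preserving_general
    (α lam : ℝ) (hα : 0 < α) (hlam : 0 < lam)
    (y yl yl' : ℝ → ℝ)
    -- y ∈ L²_{-α} with y ≥ 0 a.e. on ℝ₊
    (hy0 : ∀ᵐ x ∂(volume.restrict (Set.Ici (0:ℝ))), 0 ≤ y x)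
    -- y_λ is absolutely continuous on ℝ₊ with a.e. derivative y_λ'
    (hloc : ∀ x : ℝ, IntegrableOn yl' (Set.Ioc 0 x))
    (hAC : ∀ x : ℝ, 0 ≤ x → yl x = yl 0 + ∫ t in (0:ℝ)..x, yl' t)
    -- y_λ, y_λ' ∈ L²_{-α}
    (hyl2 : IntegrableOn (fun x => yl x ^ 2 * Real.exp (-(α * x))) (Set.Ici 0))
    -- the resolvent equation y_λ - λ y_λ' + λ α y_λ = y a.e. on ℝ₊
    (heq : ∀ᵐ x ∂(volume.restrict (Set.Ici (0:ℝ))),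
      yl x - lam * yl' x + lam * α * yl x = y x) :
    ∀ᵐ x ∂(volume.restrict (Set.Ici (0:ℝ))), 0 ≤ yl x := by
  set β := α + lam⁻¹
  have hineq : ∀ᵐ x, x ∈ Ici (0:ℝ) → yl' x ≤ β * yl x := by
    rw [← ae_restrict_iff' measurableSet_Ici]
    filter_upwards [heq, hy0] with x hx hyx using le_mul_of_sub_mul_add_mul_eq hlam hx hyx
  have hdecay : ∀ a x, 0 ≤ a → a ≤ x →
      Real.exp (-(β * x)) * yl x ≤ Real.exp (-(β * a)) * yl a := fun a x ha hax =>
    exp_neg_mul_mul_le_of_ae_le_mul ha hax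
      ((intervalIntegrable_iff_integrableOn_Ioc_of_le (ha.trans hax)).2 (hloc x))
      (fun t ht => hAC t (ha.trans ht.1))
      (hineq.mono fun t ht htI => ht (ha.trans htI.1))
  have hαβ : α ≤ 2 * β := by have := inv_pos.2 hlam; linarith
  refine (ae_restrict_iff' measurableSet_Ici).2 (ae_of_all _ fun a (ha : 0 ≤ a) => ?_)
  by_contra! hneg
  have hm : Real.exp (-(β * a)) * yl a < 0 := mul_neg_of_pos_of_neg (Real.exp_pos _) hneg
  exact not_integrableOn_Ici_of_forall_le (sq_pos_of_neg hm)
    (fun x (hx : a ≤ x) => sq_le_sq_mul_exp_neg_mul hm (hdecay a x ha hx) (ha.trans hx) hαβ)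
    (hyl2.mono_set (Ici_subset_Ici.2 ha))

/-- Fix `α > 0`, `λ > 0`, and let `H = L²(ℝ₊, e^{-αx}dx)`.  For
`y ∈ H` with `y ≥ 0` a.e. on `ℝ₊`, let `y_λ ∈ H` be an absolutely continuous
solution of `y_λ - λ y_λ' + λ α y_λ = y` with `y_λ' ∈ H`.  Then `y_λ ≥ 0` a.e. on
`ℝ₊`. -/
theorem resolvent_positivity_preserving
    (α lam : ℝ) (hα : 0 < α) (hlam : 0 < lam)
    (y yl yl' : ℝ → ℝ)
    -- y ∈ L²_{-α} with y ≥ 0 a.e. on ℝ₊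
    (hy2 : IntegrableOn (fun x => y x ^ 2 * Real.exp (-(α * x))) (Set.Ici 0))
    (hy0 : ∀ᵐ x ∂(volume.restrict (Set.Ici (0:ℝ))), 0 ≤ y x)
    -- y_λ is absolutely continuous on ℝ₊ with a.e. derivative y_λ'
    (hloc : ∀ x : ℝ, IntegrableOn yl' (Set.Ioc 0 x))
    (hAC : ∀ x : ℝ, 0 ≤ x → yl x = yl 0 + ∫ t in (0:ℝ)..x, yl' t)
    -- y_λ, y_λ' ∈ L²_{-α}
    (hyl2 : IntegrableOn (fun x => yl x ^ 2 * Real.exp (-(α * x))) (Set.Ici 0))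
    (hyl'2 : IntegrableOn (fun x => yl' x ^ 2 * Real.exp (-(α * x))) (Set.Ici 0))
    -- the resolvent equation y_λ - λ y_λ' + λ α y_λ = y a.e. on ℝ₊
    (heq : ∀ᵐ x ∂(volume.restrict (Set.Ici (0:ℝ))),
      yl x - lam * yl' x + lam * α * yl x = y x) :
    ∀ᵐ x ∂(volume.restrict (Set.Ici (0:ℝ))), 0 ≤ yl x :=
  resolvent_positivity_preserving_general α lam hα hlam y yl yl' hy0 hloc hAC hyl2 heq
end
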